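/- Define M = P^H (H − λᵢ S) P where P = U_{i−1}^c (U_{i−1}^c)^H S. Then M is Hermitian positive semidefinite and M = G G^H, where G = S U_i^c (Λ_i^c − λᵢ I)^{1/2}, U_i^c = [u_{i+1} ... uₙ], Λ_i^c = diag(λ_{i+1},...,λₙ); moreover G has full column rank. -/

import Mathlib

open Matrix
open scoped ComplexOrder

/-!
With `Uᶜ = [u_m, U₂]`, the pencil relation reads `(H - λ_m S) Uᶜ = S Uᶜ D` with
`D = diag(λ_k - λ_m)_{k ≥ m}`, and `S`-orthonormality of `Uᶜ` collapses `Pᴴ (H - λ_m S) P`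
to `S Uᶜ D Uᶜᴴ S`. The first diagonal entry of `D` is zero, so this is `S U₂ D₂ U₂ᴴ S = G Gᴴ`
where `D₂ = diag(λ_k - λ_m)_{k > m}` is positive by the gap. Finally `U₂ᴴ G = D₂^{1/2}` is
invertible, so the columns of `G` are independent.
-/

def Fin.natAddSub {n : ℕ} (m : ℕ) (k : Fin (n - m)) : Fin n :=
  ⟨m + k.1, by have := k.2; omega⟩

theorem Fin.natAddSub_injective {n : ℕ} (m : ℕ) : (Fin.natAddSub (n := n) m).Injective :=
  fun a b h => Fin.ext (by simpa [Fin.natAddSub] using congrArg Fin.val h)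

theorem Fin.range_natAddSub {n : ℕ} (m : ℕ) :
    Set.range (Fin.natAddSub (n := n) m) = {j | m ≤ j.1} := by
  ext j
  constructor
  · rintro ⟨k, rfl⟩
    exact Nat.le_add_right m k.1
  · intro (hj : m ≤ j.1)
    exact ⟨⟨j.1 - m, by omega⟩, Fin.ext (by simp [Fin.natAddSub]; omega)⟩

namespace Matrix

variable {l n p q α K : Type*}

section CommRing

variable [CommRing α]

theorem sub_smul_mul_submatrix_of_mul_eq_mul_diagonal [Fintype l] [Fintype n] [Fintype p]
    [DecidableEq n] [DecidableEq p] {H S : Matrix l l α} {U : Matrix l n α} {lam : n → α}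
    (heig : H * U = S * U * diagonal lam) (c : α) (g : p → n) :
    (H - c • S) * U.submatrix id g =
      S * U.submatrix id g * diagonal ((fun j => lam j - c) ∘ g) := by
  have hfull : (H - c • S) * U = S * U * diagonal (fun j => lam j - c) := by
    rw [Matrix.sub_mul, heig, smul_mul]
    ext i j
    simp [mul_diagonal, mul_sub, mul_comm]
  ext i k
  have h := congr_fun₂ hfull i (g k)
  rw [mul_diagonal] at h ⊢
  simpa [mul_apply] using h

variable [StarRing α]

theorem conjTranspose_submatrix_mul_mul_submatrix [Fintype l] (U : Matrix l n α)
    (S : Matrix l l α) (g : p → n) :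
    (U.submatrix id g)ᴴ * S * U.submatrix id g = (Uᴴ * S * U).submatrix g g := by
  rw [conjTranspose_submatrix, ← submatrix_id_id S,
    ← submatrix_mul _ _ _ id _ Function.bijective_id,
    ← submatrix_mul _ _ _ id _ Function.bijective_id, submatrix_id_id]

theorem conjTranspose_submatrix_mul_mul_submatrix_eq_one [Fintype l] [DecidableEq n]
    [DecidableEq p] {U : Matrix l n α} {S : Matrix l l α} (hU : Uᴴ * S * U = 1) {g : p → n}
    (hg : Function.Injective g) :
    (U.submatrix id g)ᴴ * S * U.submatrix id g = 1 := by
  rw [conjTranspose_submatrix_mul_mul_submatrix, hU, submatrix_one g hg]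

theorem conjTranspose_projector_mul_mul_projector [Fintype l] [Fintype p] [DecidableEq p]
    {S A : Matrix l l α} (hS : S.IsHermitian) {V : Matrix l p α} (hV : Vᴴ * S * V = 1)
    {D : Matrix p p α} (hAV : A * V = S * V * D) :
    (V * Vᴴ * S)ᴴ * A * (V * Vᴴ * S) = S * (V * D * Vᴴ) * S := by
  calc (V * Vᴴ * S)ᴴ * A * (V * Vᴴ * S) = S * V * (Vᴴ * (A * V)) * Vᴴ * S := by
        simp only [conjTranspose_mul, conjTranspose_conjTranspose, hS.eq, Matrix.mul_assoc]
    _ = S * V * (Vᴴ * S * V * D) * Vᴴ * S := by rw [hAV]; simp only [Matrix.mul_assoc]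
    _ = S * (V * D * Vᴴ) * S := by rw [hV, Matrix.one_mul]; simp only [Matrix.mul_assoc]

theorem mul_diagonal_mul_conjTranspose_eq_submatrix [Fintype n] [Fintype p] [DecidableEq n]
    [DecidableEq p] (V : Matrix l n α) (d : n → α) {g : p → n} (hg : Function.Injective g)
    (hd : ∀ k ∉ Set.range g, d k = 0) :
    V * diagonal d * Vᴴ = V.submatrix id g * diagonal (d ∘ g) * (V.submatrix id g)ᴴ := by
  ext i j
  rw [mul_apply, mul_apply]
  simp only [mul_diagonal, conjTranspose_apply, submatrix_apply, id, Function.comp_apply]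
  exact (Fintype.sum_of_injective g hg _ _ (fun k hk => by simp [hd k hk]) fun _ => rfl).symm

theorem submatrix_mul_diagonal_mul_conjTranspose_eq_of_range_subset [Fintype n] [Fintype p]
    [Fintype q] [DecidableEq n] [DecidableEq p] [DecidableEq q] (V : Matrix l n α) (d : n → α)
    {f : q → n} {g : p → n} (hf : Function.Injective f) (hg : Function.Injective g)
    (hgf : Set.range g ⊆ Set.range f) (hd : ∀ j, f j ∉ Set.range g → d (f j) = 0) :
    V.submatrix id f * diagonal (d ∘ f) * (V.submatrix id f)ᴴ =
      V.submatrix id g * diagonal (d ∘ g) * (V.submatrix id g)ᴴ := by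
  classical
  have hf_ind : d ∘ f = (Set.range g).indicator d ∘ f := by
    ext j
    by_cases hj : f j ∈ Set.range g
    · simp [Set.indicator_of_mem hj]
    · simp [Set.indicator_of_notMem hj, hd j hj]
  have hg_ind : d ∘ g = (Set.range g).indicator d ∘ g := by
    ext k
    simp
  rw [hf_ind, hg_ind,
    ← mul_diagonal_mul_conjTranspose_eq_submatrix V _ hf fun k hk =>
      Set.indicator_of_notMem (fun hkg => hk (hgf hkg)) d,
    ← mul_diagonal_mul_conjTranspose_eq_submatrix V _ hg fun k hk =>
      Set.indicator_of_notMem hk d]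

theorem submatrix_natAddSub_mul_diagonal_mul_conjTranspose {m k : ℕ} (hm : m < k)
    (V : Matrix l (Fin k) α) (d : Fin k → α) (hd : d ⟨m, hm⟩ = 0) :
    V.submatrix id (Fin.natAddSub m) * diagonal (d ∘ Fin.natAddSub m) *
        (V.submatrix id (Fin.natAddSub m))ᴴ =
      V.submatrix id (Fin.natAddSub (m + 1)) * diagonal (d ∘ Fin.natAddSub (m + 1)) *
        (V.submatrix id (Fin.natAddSub (m + 1)))ᴴ := by
  refine submatrix_mul_diagonal_mul_conjTranspose_eq_of_range_subset V d
    (Fin.natAddSub_injective _) (Fin.natAddSub_injective _) ?_ fun j hj => ?_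
  · simp only [Fin.range_natAddSub, Set.ofPred_subset_ofPred]
    omega
  · have hj_eq : Fin.natAddSub m j = ⟨m, hm⟩ := by
      simp only [Fin.range_natAddSub, Set.mem_ofPred_eq, not_le] at hj
      exact Fin.ext (by simp only [Fin.natAddSub] at hj ⊢; omega)
    rw [hj_eq, hd]

theorem mul_diagonal_mul_conjTranspose_mul_diagonal [Fintype p] [DecidableEq p]
    (X : Matrix l p α) (d : p → α) :
    X * diagonal d * (X * diagonal d)ᴴ = X * diagonal (fun k => d k * star (d k)) * Xᴴ := by
  rw [conjTranspose_mul, diagonal_conjTranspose, Matrix.mul_assoc,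
    ← Matrix.mul_assoc (diagonal d), diagonal_mul_diagonal, Matrix.mul_assoc]
  rfl

end CommRing

theorem mul_diagonal_sqrt_mul_conjTranspose [Fintype p] [DecidableEq p]
    (X : Matrix l p ℂ) {x : p → ℝ} (hx : ∀ k, 0 ≤ x k) :
    X * diagonal (fun k => ((√(x k) : ℝ) : ℂ)) *
        (X * diagonal fun k => ((√(x k) : ℝ) : ℂ))ᴴ =
      X * diagonal (fun k => (x k : ℂ)) * Xᴴ := by
  rw [mul_diagonal_mul_conjTranspose_mul_diagonal]
  congr
  funext k
  rw [Complex.star_def, Complex.conj_ofReal, ← Complex.ofReal_mul, Real.mul_self_sqrt (hx k)]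

section Field

variable [Field K] [Fintype p] [DecidableEq p]

theorem linearIndependent_col_of_mul_eq_one [Fintype l] {A : Matrix l p K} {B : Matrix p l K}
    (h : B * A = 1) : LinearIndependent K A.col :=
  mulVec_injective_iff.mp fun x y hxy => by
    simpa [mulVec_mulVec, h] using congrArg (B *ᵥ ·) hxy

theorem linearIndependent_col_mul_diagonal [Fintype l] {W : Matrix l p K} {B : Matrix p l K}
    (hBW : B * W = 1) {d : p → K} (hd : ∀ k, d k ≠ 0) :
    LinearIndependent K (W * diagonal d).col := by
  refine linearIndependent_col_of_mul_eq_one (B := diagonal d⁻¹ * B) ?_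
  rw [Matrix.mul_assoc, ← Matrix.mul_assoc B, hBW, Matrix.one_mul, diagonal_mul_diagonal]
  ext i j
  simp [one_apply, diagonal_apply, hd]

end Field

end Matrix

/-- `M = Pᴴ(H − λᵢS)P` with `P = U_{i−1}ᶜ (U_{i−1}ᶜ)ᴴ S` is Hermitian positive
semidefinite, `M = G Gᴴ` with `G = S Uᵢᶜ (Λᵢᶜ − λᵢI)^{1/2}`, and `G` has full column
rank. (0-based: the target eigenvalue has index `m`.) -/
theorem stmt13 {n m : ℕ} (hm1 : m + 1 < n)
    (H S U Λ : Matrix (Fin n) (Fin n) ℂ) (lam : Fin n → ℝ)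
    (hS : S.PosDef)
    (hΛ : Λ = Matrix.diagonal fun k => (lam k : ℂ))
    (hmono : Monotone lam)
    (hgap : lam ⟨m, by omega⟩ < lam ⟨m + 1, hm1⟩)
    (hortho : Uᴴ * S * U = 1)
    (heig : H * U = S * U * Λ)
    (Uc : Matrix (Fin n) (Fin (n - m)) ℂ)
    (hUc : Uc = U.submatrix id fun k => (⟨m + k.1, by have := k.2; omega⟩ : Fin n))
    (P : Matrix (Fin n) (Fin n) ℂ) (hP : P = Uc * Ucᴴ * S)
    (M : Matrix (Fin n) (Fin n) ℂ)
    (hM : M = Pᴴ * (H - ((lam ⟨m, by omega⟩ : ℝ) : ℂ) • S) * P)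
    (Uc2 : Matrix (Fin n) (Fin (n - (m + 1))) ℂ)
    (hUc2 : Uc2 = U.submatrix id fun k => (⟨m + 1 + k.1, by have := k.2; omega⟩ : Fin n))
    (G : Matrix (Fin n) (Fin (n - (m + 1))) ℂ)
    (hG : G = S * Uc2 * Matrix.diagonal fun k =>
      ((Real.sqrt (lam ⟨m + 1 + k.1, by have := k.2; omega⟩ - lam ⟨m, by omega⟩) : ℝ) : ℂ)) :
    M.PosSemidef ∧ M = G * Gᴴ ∧ LinearIndependent ℂ (fun j => Gᵀ j) := by
  have hUc' : Uc = U.submatrix id (Fin.natAddSub m) := hUc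
  have hUc2' : Uc2 = U.submatrix id (Fin.natAddSub (m + 1)) := hUc2
  set lm := lam ⟨m, by omega⟩
  set x : Fin (n - (m + 1)) → ℝ := fun k => lam (Fin.natAddSub (m + 1) k) - lm
  have hx : ∀ k, 0 < x k := fun k =>
    sub_pos.mpr (hgap.trans_le (hmono (Fin.le_def.mpr (by simp [Fin.natAddSub]))))
  have hM' : M = S * (Uc2 * diagonal (fun k => (x k : ℂ)) * Uc2ᴴ) * S := by
    have hD : (fun j => (lam j : ℂ) - lm) ∘ Fin.natAddSub (m + 1) = fun k => (x k : ℂ) :=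
      funext fun k => by simp [x]
    have hUc_orth : Ucᴴ * S * Uc = 1 :=
      hUc' ▸ conjTranspose_submatrix_mul_mul_submatrix_eq_one hortho (Fin.natAddSub_injective m)
    rw [hM, hP, conjTranspose_projector_mul_mul_projector hS.1 hUc_orth
      (hUc' ▸ sub_smul_mul_submatrix_of_mul_eq_mul_diagonal (hΛ ▸ heig) _ _), hUc', hUc2',
      submatrix_natAddSub_mul_diagonal_mul_conjTranspose (by omega) U _ (sub_self _), hD]
  have hG' : G = S * Uc2 * diagonal (fun k => ((√(x k) : ℝ) : ℂ)) := hG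
  have hGG : M = G * Gᴴ := by
    rw [hG', mul_diagonal_sqrt_mul_conjTranspose _ fun k => (hx k).le, hM', conjTranspose_mul,
      hS.1.eq]
    simp only [Matrix.mul_assoc]
  have hUc2_orth : Uc2ᴴ * (S * Uc2) = 1 := by
    rw [← Matrix.mul_assoc, hUc2']
    exact conjTranspose_submatrix_mul_mul_submatrix_eq_one hortho (Fin.natAddSub_injective _)
  refine ⟨hGG ▸ posSemidef_self_mul_conjTranspose G, hGG, ?_⟩
  rw [hG']
  exact linearIndependent_col_mul_diagonal hUc2_orth
    fun k => Complex.ofReal_ne_zero.mpr (Real.sqrt_pos.mpr (hx k)).ne'
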